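/- For all n ≥ 0 and positive integers r, Σ_{k=0}^{n} C(n,k) w_k^{(r)}(y) r^{n-k} = (-1)^n w_n^{(r)}(-y-1) as an identity of polynomials in y. -/

import Mathlib

open Finset

/-- Stirling numbers of the second kind. -/
def stirling2 : ℕ → ℕ → ℕ
  | 0, 0 => 1
  | 0, _+1 => 0
  | _+1, 0 => 0
  | n+1, k+1 => stirling2 n k + (k+1) * stirling2 n (k+1)

/-- Unsigned Stirling numbers of the first kind. -/
def stirling1 : ℕ → ℕ → ℕ
  | 0, 0 => 1
  | 0, _+1 => 0
  | _+1, 0 => 0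
  | n+1, k+1 => stirling1 n k + n * stirling1 n (k+1)

/-- `rstirling2 r n k` is the r-Stirling number of the second kind S_r(n+r, k+r). -/
def rstirling2 (r : ℕ) : ℕ → ℕ → ℕ
  | 0, 0 => 1
  | 0, _+1 => 0
  | n+1, 0 => r * rstirling2 r n 0
  | n+1, k+1 => rstirling2 r n k + (k+1+r) * rstirling2 r n (k+1)

/-- `rstirling1 r n k` is the unsigned r-Stirling number of the first kind c_r(n+r, k+r). -/
def rstirling1 (r : ℕ) : ℕ → ℕ → ℕ
  | 0, 0 => 1
  | 0, _+1 => 0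
  | n+1, 0 => (n+r) * rstirling1 r n 0
  | n+1, k+1 => rstirling1 r n k + (n+r) * rstirling1 r n (k+1)

/-- Rising factorial (Pochhammer symbol) (r)_k = r(r+1)⋯(r+k-1). -/
def risingFactorial (r k : ℕ) : ℕ := ∏ i ∈ Finset.range k, (r + i)

/-- Higher order geometric polynomial w_n^{(r)}(y) = Σ_{k=0}^n S(n,k) (r)_k y^k.
For r = 1 this is the geometric (Fubini) polynomial w_n(y). -/
def geomPoly (r n : ℕ) {R : Type*} [CommRing R] (y : R) : R :=
  ∑ k ∈ Finset.range (n+1), ((stirling2 n k * risingFactorial r k : ℕ) : R) * y ^ k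

/-!
With `L p = y(y+1)p' + r y p`, the recurrence `S(n+1,k+1) = S(n,k) + (k+1)S(n,k+1)` gives
`w_{n+1}^{(r)} = L w_n^{(r)}`, so `w_n^{(r)} = Lⁿ 1` and, since `L` commutes with the scalar `r`,
the left-hand side is `(L + r)ⁿ 1` by the binomial theorem. The substitution `y ↦ -y-1`
conjugates `L` into `-(L + r)`, hence `w_n^{(r)}(-y-1) = (-1)ⁿ (L + r)ⁿ 1`.
-/

open Polynomial

theorem stirling2_eq_zero_of_lt : ∀ {n k : ℕ}, n < k → stirling2 n k = 0
  | 0, _ + 1, _ => rfl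
  | n + 1, k + 1, h => by
    rw [stirling2, stirling2_eq_zero_of_lt (by omega), stirling2_eq_zero_of_lt (by omega)]
    simp

theorem risingFactorial_succ (r k : ℕ) :
    risingFactorial r (k + 1) = risingFactorial r k * (r + k) :=
  prod_range_succ _ _

section

variable (R : Type*) [CommRing R]

noncomputable def geomPolynomial (r n : ℕ) : R[X] :=
  ∑ k ∈ range (n + 1), C ((stirling2 n k * risingFactorial r k : ℕ) : R) * X ^ k

variable {R}

theorem eval_geomPolynomial (r n : ℕ) (y : R) :
    (geomPolynomial R r n).eval y = geomPoly r n y := by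
  simp [geomPolynomial, geomPoly, eval_finsetSum]

theorem coeff_geomPolynomial (r n m : ℕ) :
    (geomPolynomial R r n).coeff m = ((stirling2 n m * risingFactorial r m : ℕ) : R) := by
  simp only [geomPolynomial, finsetSum_coeff, coeff_C_mul, coeff_X_pow, mul_ite, mul_one,
    mul_zero, sum_ite_eq, mem_range]
  split_ifs with hm
  · rfl
  · rw [stirling2_eq_zero_of_lt (by omega), zero_mul, Nat.cast_zero]

theorem geomPolynomial_zero (r : ℕ) : geomPolynomial R r 0 = 1 := by
  simp [geomPolynomial, stirling2, risingFactorial]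

theorem coeff_X_mul_derivative (p : R[X]) (m : ℕ) :
    (X * derivative p).coeff m = m * p.coeff m := by
  cases m with
  | zero => simp
  | succ m => rw [coeff_X_mul, coeff_derivative]; push_cast; ring

noncomputable def geomOp (a : R) : Module.End R R[X] :=
  LinearMap.mulLeft R (X * (X + 1)) ∘ₗ derivative + LinearMap.mulLeft R (C a * X)

theorem geomOp_apply (a : R) (p : R[X]) :
    geomOp a p = X * (X + 1) * derivative p + C a * X * p := rfl

theorem geomPolynomial_succ (r n : ℕ) :
    geomPolynomial R r (n + 1) = geomOp (r : R) (geomPolynomial R r n) := by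
  have hop : geomOp (r : R) (geomPolynomial R r n) = X * (X * derivative (geomPolynomial R r n) +
      derivative (geomPolynomial R r n) + C (r : R) * geomPolynomial R r n) := by
    rw [geomOp_apply]; ring
  rw [hop]
  ext (_ | m)
  · simp [coeff_geomPolynomial, stirling2]
  · rw [coeff_X_mul, coeff_add, coeff_add, coeff_X_mul_derivative, coeff_derivative, coeff_C_mul]
    simp only [coeff_geomPolynomial, stirling2, risingFactorial_succ]
    push_cast
    ring

theorem geomPolynomial_eq_pow_apply (r n : ℕ) :
    geomPolynomial R r n = (geomOp (r : R) ^ n) 1 := by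
  induction n with
  | zero => exact geomPolynomial_zero r
  | succ n ih => rw [geomPolynomial_succ, ih, pow_succ', Module.End.mul_apply]

noncomputable def compNegXSubOne : Module.End R R[X] := (aeval (-X - 1 : R[X])).toLinearMap

theorem compNegXSubOne_apply (p : R[X]) : compNegXSubOne p = p.comp (-X - 1) :=
  comp_eq_aeval.symm

theorem semiconjBy_compNegXSubOne_geomOp (a : R) :
    SemiconjBy compNegXSubOne (geomOp a) (-(geomOp a + algebraMap R _ a)) := by
  refine LinearMap.ext fun p => ?_
  simp only [Module.End.mul_apply, compNegXSubOne_apply, geomOp_apply, LinearMap.neg_apply,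
    LinearMap.add_apply, Module.algebraMap_end_apply, derivative_comp, mul_comp, add_comp,
    X_comp, C_comp, one_comp, derivative_sub, derivative_neg, derivative_X, derivative_one, smul_eq_C_mul]
  ring

theorem geomOp_add_pow_apply_one (r n : ℕ) :
    ((geomOp (r : R) + algebraMap R _ r) ^ n) 1 =
      ∑ k ∈ range (n + 1), C (n.choose k : R) * geomPolynomial R r k * C (r : R) ^ (n - k) := by
  rw [(Algebra.commute_algebraMap_right _ _).add_pow, LinearMap.sum_apply]
  refine sum_congr rfl fun k _ => ?_
  rw [Module.End.mul_apply, Module.End.mul_apply, ← map_pow, Module.algebraMap_end_apply,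
    Module.End.natCast_apply, map_smul, map_nsmul, ← geomPolynomial_eq_pow_apply, smul_eq_C_mul,
    nsmul_eq_mul, ← C_eq_natCast, C_pow]
  ring

end

theorem stmt_12_general (n r : ℕ) (y : ℤ) :
    ∑ k ∈ Finset.range (n+1), (n.choose k : ℤ) * geomPoly r k y * (r : ℤ)^(n-k) =
      (-1)^n * geomPoly r n (-y - 1) := by
  have h := congrArg (eval y) (LinearMap.congr_fun
    ((semiconjBy_compNegXSubOne_geomOp (r : ℤ)).pow_right n) 1)
  simp only [Module.End.mul_apply, compNegXSubOne_apply, one_comp] at h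
  have hsign : (-(geomOp (r : ℤ) + algebraMap ℤ _ r)) ^ n =
      (((-1) ^ n : ℤ) : Module.End ℤ ℤ[X]) * (geomOp (r : ℤ) + algebraMap ℤ _ r) ^ n := by
    rw [Int.cast_pow, Int.cast_neg, Int.cast_one]
    exact neg_pow (geomOp (r : ℤ) + algebraMap ℤ _ r) n
  rw [hsign, Module.End.mul_apply, Module.End.intCast_apply, geomOp_add_pow_apply_one,
    ← geomPolynomial_eq_pow_apply] at h
  simp only [eval_comp, eval_smul, eval_finsetSum, eval_mul, eval_pow, eval_C, eval_sub, eval_neg,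
    eval_X, eval_one, eval_geomPolynomial, smul_eq_mul] at h
  rw [h, ← mul_assoc, ← mul_pow, neg_one_mul, neg_neg, one_pow, one_mul]

theorem stmt_12 (n r : ℕ) (hr : 1 ≤ r) (y : ℤ) :
    ∑ k ∈ Finset.range (n+1), (n.choose k : ℤ) * geomPoly r k y * (r : ℤ)^(n-k) =
      (-1)^n * geomPoly r n (-y - 1) :=
  stmt_12_general n r y
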